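/- If y ≥ u and y ≥ v in the Young–Fibonacci order, then y ≥ o(u,v), where o(u,v) is defined as follows: write u = u'w, v = v'w with w the longest common suffix, assume WLOG #u ≥ #v (number of digits), and let o(u,v) be obtained from u by replacing the first max(#v' − d(u'), 0) ones of u by twos (d denotes the number of 2's). In particular, o(u,v) is the least upper bound of u and v. -/

import Mathlib

inductive YFDigit : Type
  | one : YFDigit
  | two : YFDigit
  deriving DecidableEq, Repr

abbrev YFWord := List YFDigit

namespace YFWord

/-- value of a digit -/
def digitVal : YFDigit → ℕ
  | .one => 1
  | .two => 2

/-- digit sum of a word -/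
def dsum (v : YFWord) : ℕ := (v.map digitVal).sum

/-- number of 2's in a word -/
def twos (v : YFWord) : ℕ := v.count YFDigit.two

/-- longest common prefix of two lists -/
def commonPrefix : YFWord → YFWord → YFWord
  | a :: x, b :: y => if a = b then a :: commonPrefix x y else []
  | _, _ => []

/-- longest common suffix -/
def lcs (x y : YFWord) : YFWord := (commonPrefix x.reverse y.reverse).reverse

/-- the prefix of `x` remaining after deleting the longest common suffix of `x` and `y` -/
def rem (x y : YFWord) : YFWord := x.take (x.length - (lcs x y).length)

/-- the Young–Fibonacci order: x ≤ y iff, after removing the longest common suffix,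
the remaining prefix of `y` has at least as many 2's as the remaining prefix of `x` has digits -/
def yfLE (x y : YFWord) : Prop := (rem x y).length ≤ twos (rem y x)

/-- strict Young–Fibonacci order -/
def yfLT (x y : YFWord) : Prop := yfLE x y ∧ ¬ yfLE y x

/-- `y` covers `x` in the Young–Fibonacci order -/
def covers (x y : YFWord) : Prop := yfLT x y ∧ ∀ z, ¬ (yfLT x z ∧ yfLT z y)

end YFWord

open YFWord

namespace YFWord

/-- replace the first `k` ones of a word by twos -/
def repl : ℕ → YFWord → YFWord
  | 0, l => l
  | _ + 1, [] => []
  | k + 1, YFDigit.two :: l => YFDigit.two :: repl (k + 1) l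
  | k + 1, YFDigit.one :: l => YFDigit.two :: repl k l

/-- the word `o(u,v)`: assuming WLOG `#u ≥ #v`, obtained from `u` by replacing its first
`max(#v' − d(u'), 0)` ones by twos, where `u = u'w`, `v = v'w`, `w` the longest common suffix -/
def joinWord (u v : YFWord) : YFWord :=
  if v.length ≤ u.length then repl ((rem v u).length - twos (rem u v)) u
  else repl ((rem u v).length - twos (rem v u)) v

end YFWord

/-! Write `u = u' w`, `v = v' w` with `w` the longest common suffix, and `u' = p q` where `p` is
the shortest prefix of `u'` containing the `k = #v' - d(u')` ones that are replaced, so that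
`o(u,v) = 2^#p q w` and `#p = d(p) + k`. Let `y` be an upper bound of `u` and `v`, and `s` the
common suffix of `u` and `y`. If `s` is a suffix of `q w`, the 2's of `y` that pay for the
remainder of `u` also pay for the corresponding remainder of `o(u,v)`. Otherwise `s = c q w` with
`p = a c`; since `s` is longer than `w`, the ultrametric property of common suffixes forces the
common suffix of `v` and `y` to be exactly `w`, and `v ≤ y` then supplies the `#p` twos needed. -/

namespace YFWord

section CommonSuffix

theorem commonPrefix_prefix : ∀ x y : YFWord, commonPrefix x y <+: x ∧ commonPrefix x y <+: y
  | a :: x, b :: y => by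
    unfold commonPrefix
    split_ifs with h
    · subst h
      simpa only [List.prefix_cons_inj] using commonPrefix_prefix x y
    · simp
  | [], _ | _ :: _, [] => by simp [commonPrefix]

theorem length_le_length_commonPrefix :
    ∀ {p x y : YFWord}, p <+: x → p <+: y → p.length ≤ (commonPrefix x y).length
  | [], _, _, _, _ => by simp
  | a :: p, _, _, ⟨x, rfl⟩, ⟨y, rfl⟩ => by
    simpa [commonPrefix] using length_le_length_commonPrefix (p := p) ⟨x, rfl⟩ ⟨y, rfl⟩

theorem lcs_suffix_left (x y : YFWord) : lcs x y <:+ x := by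
  simpa [lcs] using (commonPrefix_prefix x.reverse y.reverse).1.reverse

theorem lcs_suffix_right (x y : YFWord) : lcs x y <:+ y := by
  simpa [lcs] using (commonPrefix_prefix x.reverse y.reverse).2.reverse

theorem length_le_length_lcs {t x y : YFWord} (hx : t <:+ x) (hy : t <:+ y) :
    t.length ≤ (lcs x y).length := by
  simpa [lcs] using length_le_length_commonPrefix hx.reverse hy.reverse

theorem lcs_comm (x y : YFWord) : lcs x y = lcs y x := by
  have hxy := length_le_length_lcs (lcs_suffix_right x y) (lcs_suffix_left x y)
  have hyx := length_le_length_lcs (lcs_suffix_right y x) (lcs_suffix_left y x)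
  exact (List.suffix_of_suffix_length_le (lcs_suffix_left x y) (lcs_suffix_right y x)
    hxy).eq_of_length (le_antisymm hxy hyx)

theorem min_length_lcs_le (x y z : YFWord) :
    min (lcs x y).length (lcs y z).length ≤ (lcs x z).length := by
  set m := min (lcs x y).length (lcs y z).length
  have hm : m ≤ y.length := (min_le_left _ _).trans (lcs_suffix_right x y).length_le
  have ht : y.drop (y.length - m) <:+ y := List.drop_suffix _ _
  have hlen : (y.drop (y.length - m)).length = m := by rw [List.length_drop]; omega
  refine hlen ▸ length_le_length_lcs ?_ ?_
  · exact (List.suffix_of_suffix_length_le ht (lcs_suffix_right x y)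
      (by rw [hlen]; omega)).trans (lcs_suffix_left x y)
  · exact (List.suffix_of_suffix_length_le ht (lcs_suffix_left y z)
      (by rw [hlen]; omega)).trans (lcs_suffix_right y z)

theorem lcs_eq_of_length_lcs_lt {x y z : YFWord} (h : (lcs x y).length < (lcs x z).length) :
    lcs y z = lcs x y := by
  have hle := min_length_lcs_le y x z
  have hge := min_length_lcs_le x z y
  rw [lcs_comm y x] at hle
  rw [lcs_comm z y] at hge
  exact (List.suffix_of_suffix_length_le (lcs_suffix_left y z) (lcs_suffix_right x y)
    (by omega)).eq_of_length (by omega)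

theorem rem_append_lcs (x y : YFWord) : rem x y ++ lcs x y = x :=
  List.suffix_iff_eq_append.1 (lcs_suffix_left x y)

theorem rem_eq_of_eq_append_lcs {x y f : YFWord} (h : x = f ++ lcs x y) : rem x y = f :=
  List.append_cancel_right ((rem_append_lcs x y).trans h)

end CommonSuffix

section Order

@[simp]
theorem twos_append (a b : YFWord) : twos (a ++ b) = twos a + twos b :=
  List.count_append

theorem twos_le_length (a : YFWord) : twos a ≤ a.length :=
  List.count_le_length

@[simp]
theorem twos_replicate_two (n : ℕ) : twos (List.replicate n .two) = n := by
  simp [twos]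

theorem count_one_add_twos : ∀ x : YFWord, x.count .one + twos x = x.length
  | [] => rfl
  | d :: x => by
    have := count_one_add_twos x
    cases d <;> simp [twos] at this ⊢ <;> omega

theorem yfLE_of_eq_append {x y x₀ y₀ t : YFWord} (hx : x = x₀ ++ t) (hy : y = y₀ ++ t)
    (h : x₀.length ≤ twos y₀) : yfLE x y := by
  obtain ⟨e, he⟩ := List.suffix_of_suffix_length_le (⟨x₀, hx.symm⟩ : t <:+ x)
    (lcs_suffix_left x y) (length_le_length_lcs ⟨x₀, hx.symm⟩ ⟨y₀, hy.symm⟩)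
  have hx₀ : x₀ = rem x y ++ e := List.append_cancel_right (bs := t) <| by
    rw [← hx, List.append_assoc, he, rem_append_lcs]
  have hy₀ : y₀ = rem y x ++ e := List.append_cancel_right (bs := t) <| by
    rw [← hy, List.append_assoc, he, lcs_comm, rem_append_lcs]
  have := twos_le_length e
  rw [hx₀, hy₀, List.length_append, twos_append] at h
  show (rem x y).length ≤ twos (rem y x)
  omega

theorem length_le_twos_of_yfLE {x y x₀ y₀ : YFWord} (hxy : yfLE x y)
    (hx : x = x₀ ++ lcs x y) (hy : y = y₀ ++ lcs x y) : x₀.length ≤ twos y₀ := by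
  rw [lcs_comm] at hy
  rwa [yfLE, rem_eq_of_eq_append_lcs hx, rem_eq_of_eq_append_lcs hy] at hxy

end Order

section Replace

theorem repl_append : ∀ (k : ℕ) (p q : YFWord), k ≤ p.count .one →
    repl k (p ++ q) = repl k p ++ q
  | 0, p, q, _ => by simp [repl]
  | k + 1, [], q, h => by simp at h
  | k + 1, .two :: p, q, h => by
    simp [repl, repl_append (k + 1) p q (by simpa using h)]
  | k + 1, .one :: p, q, h => by
    simp [repl, repl_append k p q (by simpa using h)]

theorem exists_repl_eq_replicate_append : ∀ (k : ℕ) (x : YFWord), k ≤ x.count .one →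
    ∃ p q : YFWord, x = p ++ q ∧ repl k x = List.replicate p.length .two ++ q ∧
      p.length = twos p + k
  | 0, x, _ => ⟨[], x, rfl, by simp [repl], rfl⟩
  | k + 1, [], h => by simp at h
  | k + 1, .two :: x, h => by
    obtain ⟨p, q, rfl, hrepl, hp⟩ :=
      exists_repl_eq_replicate_append (k + 1) x (by simpa using h)
    refine ⟨.two :: p, q, rfl, by simp [repl, hrepl, List.replicate_succ], ?_⟩
    simp only [twos, List.length_cons, List.count_cons_self] at hp ⊢
    omega
  | k + 1, .one :: x, h => by
    obtain ⟨p, q, rfl, hrepl, hp⟩ := exists_repl_eq_replicate_append k x (by simpa using h)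
    refine ⟨.one :: p, q, rfl, by simp [repl, hrepl, List.replicate_succ], ?_⟩
    simp only [twos, List.length_cons,
      List.count_cons_of_ne (by decide : YFDigit.one ≠ .two)] at hp ⊢
    omega

end Replace

section Join

def IsJoin (u v j : YFWord) : Prop :=
  (∀ y : YFWord, yfLE u y → yfLE v y → yfLE j y) ∧ yfLE u j ∧ yfLE v j

theorem IsJoin.symm {u v j : YFWord} (h : IsJoin u v j) : IsJoin v u j :=
  ⟨fun y hv hu => h.1 y hu hv, h.2.2, h.2.1⟩

theorem replicate_append_le_of_length_lcs_le {p r y : YFWord} (hle : yfLE (p ++ r) y)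
    (hs : (lcs (p ++ r) y).length ≤ r.length) :
    yfLE (List.replicate p.length .two ++ r) y := by
  obtain ⟨x, hx⟩ := List.suffix_of_suffix_length_le (lcs_suffix_left (p ++ r) y)
    (List.suffix_append p r) hs
  have hrem : rem (p ++ r) y = p ++ x :=
    rem_eq_of_eq_append_lcs (by rw [List.append_assoc, hx])
  refine yfLE_of_eq_append (x₀ := List.replicate p.length .two ++ x) (t := lcs (p ++ r) y)
    (by rw [List.append_assoc, hx]) (by rw [lcs_comm, rem_append_lcs]) ?_
  have : (p ++ x).length ≤ twos (rem y (p ++ r)) := hrem ▸ hle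
  simpa using this

theorem replicate_append_le_of_length_lt_length_lcs {p q w v' y : YFWord}
    (hu : yfLE (p ++ q ++ w) y) (hv : yfLE (v' ++ w) y) (hw : lcs (p ++ q ++ w) (v' ++ w) = w)
    (hp : p.length ≤ twos p + (v'.length - twos (p ++ q)))
    (hs : (q ++ w).length < (lcs (p ++ q ++ w) y).length) :
    yfLE (List.replicate p.length .two ++ (q ++ w)) y := by
  have hvy : lcs (v' ++ w) y = w := by
    have hlt : (lcs (p ++ q ++ w) (v' ++ w)).length < (lcs (p ++ q ++ w) y).length := by
      rw [hw]
      exact (List.suffix_append q w).length_le.trans_lt hs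
    rw [lcs_eq_of_length_lcs_lt hlt, hw]
  have hua := (rem_append_lcs (p ++ q ++ w) y).symm
  have hyb := (rem_append_lcs y (p ++ q ++ w)).symm
  have hab : (rem (p ++ q ++ w) y).length ≤ twos (rem y (p ++ q ++ w)) := hu
  rw [lcs_comm] at hyb
  generalize lcs (p ++ q ++ w) y = s at hua hyb hs
  generalize rem (p ++ q ++ w) y = a at hua hab
  generalize rem y (p ++ q ++ w) = b at hyb hab
  obtain ⟨c, rfl⟩ : a <+: p := by
    refine List.prefix_of_prefix_length_le ⟨s, hua.symm⟩ ⟨q ++ w, by simp⟩ ?_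
    have := congrArg List.length hua
    simp only [List.length_append] at this hs
    omega
  have hs_eq : s = c ++ q ++ w := List.append_cancel_left (as := a) <| by
    rw [← hua]; simp
  have hv' : v'.length ≤ twos (b ++ c ++ q) :=
    length_le_twos_of_yfLE hv (by rw [hvy]) (by rw [hvy, hyb, hs_eq]; simp)
  refine yfLE_of_eq_append (y₀ := b ++ c) rfl (by rw [hyb, hs_eq]; simp) ?_
  have := twos_le_length a
  simp only [twos_append, List.length_replicate] at hp hv' ⊢
  omega

theorem isJoin_replicate_append {p q w v' : YFWord} (hw : lcs (p ++ q ++ w) (v' ++ w) = w)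
    (hp : p.length = twos p + (v'.length - twos (p ++ q))) :
    IsJoin (p ++ q ++ w) (v' ++ w) (List.replicate p.length .two ++ (q ++ w)) := by
  refine ⟨fun y hu hv => ?_, ?_, ?_⟩
  · rcases le_or_gt (lcs (p ++ q ++ w) y).length (q ++ w).length with hs | hs
    · rw [List.append_assoc] at hu hs
      exact replicate_append_le_of_length_lcs_le hu hs
    · exact replicate_append_le_of_length_lt_length_lcs hu hv hw hp.le hs
  · exact yfLE_of_eq_append (List.append_assoc _ _ _) rfl (by simp)
  · refine yfLE_of_eq_append rfl (y₀ := List.replicate p.length .two ++ q) (by simp) ?_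
    simp only [twos_append, twos_replicate_two] at hp ⊢
    omega

theorem isJoin_repl {u v : YFWord} (h : v.length ≤ u.length) :
    IsJoin u v (repl ((rem v u).length - twos (rem u v)) u) := by
  have hu := (rem_append_lcs u v).symm
  have hv := (rem_append_lcs v u).symm
  rw [lcs_comm] at hv
  generalize hw : lcs u v = w at hu hv
  generalize rem u v = u' at hu ⊢
  generalize rem v u = v' at hv ⊢
  subst hu hv
  have hk : v'.length - twos u' ≤ u'.count .one := by
    have := count_one_add_twos u'
    simp only [List.length_append] at h
    omega
  obtain ⟨p, q, rfl, hrepl, hp⟩ := exists_repl_eq_replicate_append _ _ hk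
  rw [repl_append _ _ _ hk, hrepl]
  simpa only [List.append_assoc] using isJoin_replicate_append hw hp

end Join

end YFWord

theorem yf_joinWord_least_upper_bound (u v : YFWord) :
    (∀ y : YFWord, yfLE u y → yfLE v y → yfLE (joinWord u v) y) ∧
    yfLE u (joinWord u v) ∧ yfLE v (joinWord u v) := by
  unfold joinWord
  split_ifs with h
  · exact isJoin_repl h
  · exact (isJoin_repl (le_of_not_ge h)).symm
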